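/- Let T > 0 and let 0 < α ≤ 1 and 0 < γ ≤ 1 be Hölder exponents with γ > 1 − α. Let S : [0,T] → ℝ be α-Hölder continuous and let π : [0,T] → ℝ be γ-Hölder continuous. Then the Riemann–Stieltjes integral ∫₀ᵀ π dS exists: there is a real number I such that for every ε > 0 there exists δ > 0 such that for every partition 0 = t₀ < t₁ < ⋯ < tₙ = T with mesh max_i (t_{i+1} − t_i) < δ and every choice of tags ξ_i ∈ [t_i, t_{i+1}], one has |∑_{i=0}^{n−1} π(ξ_i)(S(t_{i+1}) − S(t_i)) − I| < ε. -/

import Mathlib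

/-!
Young's argument. Write `Ξ x y = π x * (S y - S x)`, so that the left-point Riemann–Stieltjes
sums are `∑ Ξ (tᵢ, tᵢ₊₁)`. The defect `Ξ x z - Ξ x y - Ξ y z = (π x - π y) * (S z - S y)` is
`O((z - x) ^ θ)` with `θ = α + γ > 1`. In a partition of `[x, y]` into `n + 1` intervals some
point has its two neighbouring intervals of total length `≤ 2 (y - x) / n`; removing it changes
the sum by `O(n ^ (-θ) (y - x) ^ θ)`, and removing points one by one down to `{x, y}` shows that
the sum differs from `Ξ x y` by at most `c (y - x) ^ θ`, where `c` involves `ζ(θ) < ∞`.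
Applied on each interval of a partition of mesh `δ`, this bounds the change under refinement by
`c δ ^ (θ - 1) (b - a)`; passing through common refinements, the sums are Cauchy as the mesh
tends to `0`, and moving the tags costs `O(δ ^ (θ - 1))` as well.
-/

open Finset Filter Topology

/-- With `Ξ x y = π x * (S y - S x)` this is the left-point Riemann–Stieltjes sum of `π dS`
over `t 0 ≤ t 1 ≤ ⋯ ≤ t n`. -/
noncomputable def riemannSum (Ξ : ℝ → ℝ → ℝ) (n : ℕ) (t : ℕ → ℝ) : ℝ :=
  ∑ i ∈ range n, Ξ (t i) (t (i + 1))

def SewingBound (Ξ : ℝ → ℝ → ℝ) (s : Set ℝ) (c θ : ℝ) : Prop :=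
  ∀ n t, (∀ i ≤ n, t i ∈ s) → MonotoneOn t (Set.Iic n) →
    |riemannSum Ξ n t - Ξ (t 0) (t n)| ≤ c * (t n - t 0) ^ θ

theorem sum_sub_rpow_le_mul {n : ℕ} {t : ℕ → ℝ} {δ θ : ℝ} (ht : MonotoneOn t (Set.Iic n))
    (hθ : 1 ≤ θ) (hδ : ∀ i < n, t (i + 1) - t i ≤ δ) :
    ∑ i ∈ range n, (t (i + 1) - t i) ^ θ ≤ δ ^ (θ - 1) * (t n - t 0) := by
  rw [← sum_range_sub t n, mul_sum]
  refine sum_le_sum fun i hi => ?_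
  have hi : i < n := mem_range.1 hi
  have h0 : 0 ≤ t (i + 1) - t i :=
    sub_nonneg.2 (ht (Set.mem_Iic.2 hi.le) (Set.mem_Iic.2 hi) i.le_succ)
  calc (t (i + 1) - t i) ^ θ = (t (i + 1) - t i) ^ (θ - 1 + 1) := by rw [sub_add_cancel]
    _ = (t (i + 1) - t i) ^ (θ - 1) * (t (i + 1) - t i) :=
      Real.rpow_add_one' h0 (by linarith)
    _ ≤ δ ^ (θ - 1) * (t (i + 1) - t i) := by
      gcongr
      exact hδ i hi

theorem riemannSum_succ_eq_skip (Ξ : ℝ → ℝ → ℝ) (t : ℕ → ℝ) {j n : ℕ} (hj : j < n) :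
    riemannSum Ξ (n + 1) t = riemannSum Ξ n (fun i => t (if i ≤ j then i else i + 1)) +
      (Ξ (t j) (t (j + 1)) + Ξ (t (j + 1)) (t (j + 2)) - Ξ (t j) (t (j + 2))) := by
  obtain ⟨r, rfl⟩ : ∃ r, n = j + 1 + r := ⟨n - (j + 1), by omega⟩
  have hhead : ∑ i ∈ range j, Ξ (t (if i ≤ j then i else i + 1))
      (t (if i + 1 ≤ j then i + 1 else i + 1 + 1)) = ∑ i ∈ range j, Ξ (t i) (t (i + 1)) :=
    sum_congr rfl fun i hi => by
      rw [if_pos (by simp at hi; omega), if_pos (by simp at hi; omega)]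
  have htail : ∑ i ∈ range r, Ξ (t (if j + 1 + i ≤ j then j + 1 + i else j + 1 + i + 1))
      (t (if j + 1 + i + 1 ≤ j then j + 1 + i + 1 else j + 1 + i + 1 + 1)) =
      ∑ i ∈ range r, Ξ (t (j + 2 + i)) (t (j + 2 + i + 1)) :=
    sum_congr rfl fun i _ => by
      rw [if_neg (by omega), if_neg (by omega), show j + 1 + i + 1 = j + 2 + i by omega]
  unfold riemannSum
  rw [show j + 1 + r + 1 = j + 2 + r by ring, sum_range_add _ (j + 2), sum_range_add _ (j + 1),
    sum_range_succ, sum_range_succ, sum_range_succ, hhead, htail]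
  simp only [le_refl, if_true, show ¬(j + 1 ≤ j) by omega, if_false]
  ring

theorem exists_sub_le_two_mul_div {n : ℕ} {t : ℕ → ℝ} (hn : 0 < n)
    (ht : MonotoneOn t (Set.Iic (n + 1))) :
    ∃ j < n, t (j + 2) - t j ≤ 2 * (t (n + 1) - t 0) / n := by
  have hsum : ∑ j ∈ range n, (t (j + 2) - t j) = (t (n + 1) - t 1) + (t n - t 0) := by
    rw [← sum_range_sub (fun i => t (i + 1)) n, ← sum_range_sub t n, ← sum_add_distrib]
    exact sum_congr rfl fun i _ => by ring
  have h01 : t 0 ≤ t 1 := ht (by simp) (by simp) (by omega)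
  have hn1 : t n ≤ t (n + 1) := ht (by simp) (by simp) (by omega)
  obtain ⟨j, hj, hle⟩ := exists_le_of_sum_le (nonempty_range_iff.2 hn.ne')
    (hsum.trans_le (show _ ≤ ∑ _j ∈ range n, 2 * (t (n + 1) - t 0) / n by
      rw [sum_const, card_range, nsmul_eq_mul, mul_div_cancel₀ _ (by positivity)]
      linarith))
  exact ⟨j, mem_range.1 hj, hle⟩

section Sewing

variable {Ξ : ℝ → ℝ → ℝ} {s : Set ℝ} {K θ : ℝ}

theorem exists_abs_riemannSum_succ_sub_le (hK : 0 ≤ K) (hθ : 0 ≤ θ)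
    (hΞ : ∀ x ∈ s, ∀ y ∈ s, ∀ z ∈ s, x ≤ y → y ≤ z →
      |Ξ x z - Ξ x y - Ξ y z| ≤ K * (z - x) ^ θ)
    {n : ℕ} {t : ℕ → ℝ} (hn : 0 < n) (hts : ∀ i ≤ n + 1, t i ∈ s)
    (ht : MonotoneOn t (Set.Iic (n + 1))) :
    ∃ t' : ℕ → ℝ, (∀ i ≤ n, t' i ∈ s) ∧ MonotoneOn t' (Set.Iic n) ∧ t' 0 = t 0 ∧
      t' n = t (n + 1) ∧ |riemannSum Ξ (n + 1) t - riemannSum Ξ n t'| ≤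
        K * 2 ^ θ * (n : ℝ) ^ (-θ) * (t (n + 1) - t 0) ^ θ := by
  obtain ⟨j, hj, hjL⟩ := exists_sub_le_two_mul_div hn ht
  have hskip : ∀ i ≤ n, (if i ≤ j then i else i + 1) ≤ n + 1 := fun i hi => by split <;> omega
  have hmono : ∀ {i i'}, i ≤ i' → i' ≤ n + 1 → t i ≤ t i' := fun h h' =>
    ht (Set.mem_Iic.2 (h.trans h')) (Set.mem_Iic.2 h') h
  refine ⟨fun i => t (if i ≤ j then i else i + 1), fun i hi => hts _ (hskip i hi),
    fun i hi i' hi' hii' => ht (hskip i hi) (hskip i' hi') (by split <;> split <;> omega),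
    by simp, by simp [show ¬n ≤ j by omega], ?_⟩
  rw [riemannSum_succ_eq_skip Ξ t hj, add_sub_cancel_left]
  have hL : 0 ≤ t (n + 1) - t 0 := sub_nonneg.2 (hmono (Nat.zero_le _) le_rfl)
  calc _ = |Ξ (t j) (t (j + 2)) - Ξ (t j) (t (j + 1)) - Ξ (t (j + 1)) (t (j + 2))| := by
        rw [← abs_neg]
        congr 1
        ring
    _ ≤ K * (t (j + 2) - t j) ^ θ := hΞ _ (hts j (by omega)) _ (hts (j + 1) (by omega)) _
        (hts (j + 2) (by omega)) (hmono (by omega) (by omega)) (hmono (by omega) (by omega))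
    _ ≤ K * (2 * (t (n + 1) - t 0) / n) ^ θ := by
        gcongr
        exact sub_nonneg.2 (hmono (by omega) (by omega))
    _ = K * 2 ^ θ * (n : ℝ) ^ (-θ) * (t (n + 1) - t 0) ^ θ := by
        rw [Real.div_rpow (by positivity) (by positivity), Real.mul_rpow (by norm_num) hL,
          Real.rpow_neg (by positivity)]
        ring

theorem abs_riemannSum_sub_le_sum_rpow (hK : 0 ≤ K) (hθ : 0 < θ)
    (hΞ : ∀ x ∈ s, ∀ y ∈ s, ∀ z ∈ s, x ≤ y → y ≤ z →
      |Ξ x z - Ξ x y - Ξ y z| ≤ K * (z - x) ^ θ) :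
    ∀ n t, (∀ i ≤ n, t i ∈ s) → MonotoneOn t (Set.Iic n) →
      |riemannSum Ξ n t - Ξ (t 0) (t n)| ≤
        K * 2 ^ θ * (∑ k ∈ Ico 1 n, (k : ℝ) ^ (-θ)) * (t n - t 0) ^ θ := by
  intro n
  induction n with
  | zero =>
    intro t hts _
    simpa [riemannSum, Real.zero_rpow hθ.ne'] using hΞ _ (hts 0 le_rfl) _ (hts 0 le_rfl) _
      (hts 0 le_rfl) le_rfl le_rfl
  | succ n ih =>
    intro t hts ht
    rcases Nat.eq_zero_or_pos n with rfl | hn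
    · simp [riemannSum]
    obtain ⟨t', hts', ht', ht'0, ht'n, hremove⟩ :=
      exists_abs_riemannSum_succ_sub_le hK hθ.le hΞ hn hts ht
    have ih' := ih t' hts' ht'
    rw [ht'0, ht'n] at ih'
    rw [sum_Ico_succ_top (Nat.one_le_iff_ne_zero.2 hn.ne')]
    calc _ ≤ |riemannSum Ξ (n + 1) t - riemannSum Ξ n t'| +
          |riemannSum Ξ n t' - Ξ (t 0) (t (n + 1))| := abs_sub_le _ _ _
      _ ≤ _ := add_le_add hremove ih'
      _ = _ := by ring

/-- The `k = 0` term of the series is `0 ^ (-θ) = 0`, so the constant is `K 2 ^ θ ζ(θ)`. -/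
theorem sewingBound_of_abs_sub_le (hK : 0 ≤ K) (hθ : 1 < θ)
    (hΞ : ∀ x ∈ s, ∀ y ∈ s, ∀ z ∈ s, x ≤ y → y ≤ z →
      |Ξ x z - Ξ x y - Ξ y z| ≤ K * (z - x) ^ θ) :
    SewingBound Ξ s (K * 2 ^ θ * ∑' k : ℕ, (k : ℝ) ^ (-θ)) θ := by
  intro n t hts ht
  refine (abs_riemannSum_sub_le_sum_rpow hK (by linarith) hΞ n t hts ht).trans ?_
  have hsum : ∑ k ∈ Ico 1 n, (k : ℝ) ^ (-θ) ≤ ∑' k : ℕ, (k : ℝ) ^ (-θ) :=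
    (Real.summable_nat_rpow.2 (by linarith)).sum_le_tsum _ fun k _ => by positivity
  have htn : 0 ≤ t n - t 0 := sub_nonneg.2 (ht (by simp) (by simp) (Nat.zero_le n))
  gcongr

end Sewing

structure IsPartition (a b : ℝ) (n : ℕ) (t : ℕ → ℝ) : Prop where
  zero_eq : t 0 = a
  last_eq : t n = b
  strictMonoOn : StrictMonoOn t (Set.Iic n)

def Refines (K : ℕ) (R : ℕ → ℝ) (N : ℕ) (p : ℕ → ℝ) : Prop :=
  ∃ σ : ℕ → ℕ, σ 0 = 0 ∧ σ N = K ∧ StrictMonoOn σ (Set.Iic N) ∧ ∀ i ≤ N, p i = R (σ i)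

theorem IsPartition.mem_Icc {a b : ℝ} {n : ℕ} {t : ℕ → ℝ} (ht : IsPartition a b n t) {i : ℕ}
    (hi : i ≤ n) : t i ∈ Set.Icc a b := by
  rw [← ht.zero_eq, ← ht.last_eq]
  exact ⟨ht.strictMonoOn.monotoneOn (Nat.zero_le n) hi (Nat.zero_le i),
    ht.strictMonoOn.monotoneOn hi Set.self_mem_Iic hi⟩

theorem IsPartition.refines_of_subset_image {a b : ℝ} {K N : ℕ} {R p : ℕ → ℝ}
    (hR : IsPartition a b K R) (hp : IsPartition a b N p)
    (hpR : ∀ i ≤ N, p i ∈ R '' Set.Iic K) : Refines K R N p := by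
  set σ := fun i => Function.invFunOn R (Set.Iic K) (p i)
  have hσK : ∀ i ≤ N, σ i ≤ K := fun i hi => Function.invFunOn_mem (hpR i hi)
  have hRσ : ∀ i ≤ N, R (σ i) = p i := fun i hi => Function.invFunOn_eq (hpR i hi)
  refine ⟨σ, ?_, ?_, ?_, fun i hi => (hRσ i hi).symm⟩
  · refine hR.strictMonoOn.injOn (hσK 0 (Nat.zero_le N)) (Nat.zero_le K) ?_
    rw [hRσ 0 (Nat.zero_le N), hp.zero_eq, hR.zero_eq]
  · refine hR.strictMonoOn.injOn (hσK N le_rfl) (le_refl K) ?_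
    rw [hRσ N le_rfl, hp.last_eq, hR.last_eq]
  · intro i hi i' hi' hii'
    rw [← hR.strictMonoOn.lt_iff_lt (hσK i hi) (hσK i' hi'), hRσ i hi, hRσ i' hi']
    exact hp.strictMonoOn hi hi' hii'

theorem exists_isPartition_of_finset {a b : ℝ} (F : Finset ℝ) (ha : a ∈ F) (hb : b ∈ F)
    (hF : ∀ x ∈ F, x ∈ Set.Icc a b) : ∃ K R, IsPartition a b K R ∧ ↑F ⊆ R '' Set.Iic K := by
  set e := F.orderEmbOfFin rfl
  have hK : #F - 1 < #F := Nat.sub_lt (card_pos.2 ⟨a, ha⟩) one_pos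
  set R : ℕ → ℝ := fun j => e ⟨min j (#F - 1), by omega⟩
  have hRe : ∀ j : Fin #F, R j = e j := fun j => by
    simp only [R, min_eq_left (Nat.le_sub_one_of_lt j.2)]
  have hR : StrictMonoOn R (Set.Iic (#F - 1)) := fun j hj j' hj' hjj' => by
    simp only [R, min_eq_left (Set.mem_Iic.1 hj), min_eq_left (Set.mem_Iic.1 hj')]
    exact e.strictMono (Fin.mk_lt_mk.2 hjj')
  have hFR : ↑F ⊆ R '' Set.Iic (#F - 1) := by
    intro x hx
    rw [← F.range_orderEmbOfFin rfl] at hx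
    obtain ⟨j, rfl⟩ := hx
    exact ⟨j, Nat.le_sub_one_of_lt j.2, hRe j⟩
  have hRF : ∀ j, R j ∈ F := fun j => F.orderEmbOfFin_mem rfl _
  refine ⟨#F - 1, R, ⟨?_, ?_, hR⟩, hFR⟩
  · obtain ⟨j, hj, hja⟩ := hFR ha
    exact le_antisymm (hja ▸ hR.monotoneOn (Nat.zero_le _) hj (Nat.zero_le j)) (hF _ (hRF 0)).1
  · obtain ⟨j, hj, hjb⟩ := hFR hb
    exact le_antisymm (hF _ (hRF _)).2 (hjb ▸ hR.monotoneOn hj Set.self_mem_Iic hj)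

theorem IsPartition.exists_common_refinement {a b : ℝ} {N M : ℕ} {p q : ℕ → ℝ}
    (hp : IsPartition a b N p) (hq : IsPartition a b M q) :
    ∃ K R, IsPartition a b K R ∧ Refines K R N p ∧ Refines K R M q := by
  classical
  set F := (range (N + 1)).image p ∪ (range (M + 1)).image q
  have hpF : ∀ i ≤ N, p i ∈ F := fun i hi =>
    mem_union_left _ (mem_image_of_mem p (mem_range.2 (Nat.lt_succ_of_le hi)))
  have hqF : ∀ i ≤ M, q i ∈ F := fun i hi =>
    mem_union_right _ (mem_image_of_mem q (mem_range.2 (Nat.lt_succ_of_le hi)))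
  have hF : ∀ x ∈ F, x ∈ Set.Icc a b := by
    intro x hx
    rcases mem_union.1 hx with hx | hx <;> obtain ⟨i, hi, rfl⟩ := mem_image.1 hx
    exacts [hp.mem_Icc (Nat.le_of_lt_succ (mem_range.1 hi)),
      hq.mem_Icc (Nat.le_of_lt_succ (mem_range.1 hi))]
  obtain ⟨K, R, hR, hFR⟩ := exists_isPartition_of_finset F
    (hp.zero_eq ▸ hpF 0 (Nat.zero_le N)) (hp.last_eq ▸ hpF N le_rfl) hF
  exact ⟨K, R, hR, hR.refines_of_subset_image hp fun i hi => hFR (hpF i hi),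
    hR.refines_of_subset_image hq fun i hi => hFR (hqF i hi)⟩

theorem sum_Ico_eq_sum_range_sum_Ico {M : Type*} [AddCommMonoid M] (f : ℕ → M) {σ : ℕ → ℕ}
    {N : ℕ} (hσ : MonotoneOn σ (Set.Iic N)) :
    ∑ j ∈ Ico (σ 0) (σ N), f j = ∑ i ∈ range N, ∑ j ∈ Ico (σ i) (σ (i + 1)), f j := by
  induction N with
  | zero => simp
  | succ N ih =>
    rw [sum_range_succ, ← ih (hσ.mono (Set.Iic_subset_Iic.2 N.le_succ)),
      sum_Ico_consecutive _ (hσ (Nat.zero_le _) N.le_succ (Nat.zero_le N))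
        (hσ N.le_succ Set.self_mem_Iic N.le_succ)]

theorem isPartition_uniform {a b : ℝ} (hab : a < b) (m : ℕ) :
    IsPartition a b (m + 1) (fun i => a + i * ((b - a) / (m + 1))) := by
  refine ⟨by simp, ?_, fun i _ j _ hij => ?_⟩
  · push_cast
    field_simp
    ring
  · have : 0 < (b - a) / (m + 1) := div_pos (sub_pos.2 hab) (by positivity)
    gcongr

namespace SewingBound

variable {Ξ : ℝ → ℝ → ℝ} {a b c θ : ℝ}

theorem abs_sum_Ico_sub_le (hloc : SewingBound Ξ (Set.Icc a b) c θ) {K : ℕ} {R : ℕ → ℝ}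
    (hR : IsPartition a b K R) {m m' : ℕ} (hm : m ≤ m') (hm' : m' ≤ K) :
    |∑ j ∈ Ico m m', Ξ (R j) (R (j + 1)) - Ξ (R m) (R m')| ≤ c * (R m' - R m) ^ θ := by
  have h := hloc (m' - m) (fun j => R (m + j)) (fun j hj => hR.mem_Icc (by omega))
    fun j hj j' hj' hjj' => hR.strictMonoOn.monotoneOn (Set.mem_Iic.2 (by simp at hj; omega))
      (Set.mem_Iic.2 (by simp at hj'; omega)) (by omega)
  simpa [riemannSum, sum_Ico_eq_sum_range, add_assoc, Nat.add_sub_cancel' hm] using h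

theorem abs_riemannSum_sub_le_of_refines (hloc : SewingBound Ξ (Set.Icc a b) c θ) (hc : 0 ≤ c)
    (hθ : 1 ≤ θ) {K N : ℕ} {R p : ℕ → ℝ} {δ : ℝ} (hR : IsPartition a b K R)
    (hp : IsPartition a b N p) (hRp : Refines K R N p) (hδ : ∀ i < N, p (i + 1) - p i ≤ δ) :
    |riemannSum Ξ K R - riemannSum Ξ N p| ≤ c * δ ^ (θ - 1) * (b - a) := by
  obtain ⟨σ, hσ0, hσN, hσ, hpR⟩ := hRp
  have hblocks : riemannSum Ξ K R - riemannSum Ξ N p = ∑ i ∈ range N,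
      (∑ j ∈ Ico (σ i) (σ (i + 1)), Ξ (R j) (R (j + 1)) - Ξ (p i) (p (i + 1))) := by
    rw [sum_sub_distrib, ← sum_Ico_eq_sum_range_sum_Ico _ hσ.monotoneOn, hσ0, hσN,
      ← range_eq_Ico]
    rfl
  have hblock : ∀ i < N, |∑ j ∈ Ico (σ i) (σ (i + 1)), Ξ (R j) (R (j + 1)) -
      Ξ (p i) (p (i + 1))| ≤ c * (p (i + 1) - p i) ^ θ := fun i hi => by
    rw [hpR i hi.le, hpR (i + 1) hi]
    exact hloc.abs_sum_Ico_sub_le hR (hσ.monotoneOn hi.le hi (Nat.le_succ i))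
      (hσN ▸ hσ.monotoneOn hi (le_refl N) hi)
  rw [hblocks, ← hp.zero_eq, ← hp.last_eq, mul_assoc]
  calc _ ≤ ∑ i ∈ range N, c * (p (i + 1) - p i) ^ θ :=
        (abs_sum_le_sum_abs _ _).trans (sum_le_sum fun i hi => hblock i (mem_range.1 hi))
    _ ≤ c * (δ ^ (θ - 1) * (p N - p 0)) := by
        rw [← mul_sum]
        exact mul_le_mul_of_nonneg_left (sum_sub_rpow_le_mul hp.strictMonoOn.monotoneOn hθ hδ) hc

theorem abs_riemannSum_sub_riemannSum_le (hloc : SewingBound Ξ (Set.Icc a b) c θ) (hc : 0 ≤ c)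
    (hθ : 1 ≤ θ) {N M : ℕ} {p q : ℕ → ℝ} {δ δ' : ℝ} (hp : IsPartition a b N p)
    (hq : IsPartition a b M q) (hpδ : ∀ i < N, p (i + 1) - p i ≤ δ)
    (hqδ : ∀ i < M, q (i + 1) - q i ≤ δ') :
    |riemannSum Ξ N p - riemannSum Ξ M q| ≤ c * (δ ^ (θ - 1) + δ' ^ (θ - 1)) * (b - a) := by
  obtain ⟨K, R, hR, hRp, hRq⟩ := hp.exists_common_refinement hq
  calc _ ≤ |riemannSum Ξ K R - riemannSum Ξ N p| + |riemannSum Ξ K R - riemannSum Ξ M q| := by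
        rw [abs_sub_comm (riemannSum Ξ K R)]
        exact abs_sub_le _ _ _
    _ ≤ c * δ ^ (θ - 1) * (b - a) + c * δ' ^ (θ - 1) * (b - a) :=
        add_le_add (hloc.abs_riemannSum_sub_le_of_refines hc hθ hR hp hRp hpδ)
          (hloc.abs_riemannSum_sub_le_of_refines hc hθ hR hq hRq hqδ)
    _ = c * (δ ^ (θ - 1) + δ' ^ (θ - 1)) * (b - a) := by ring

theorem exists_forall_abs_riemannSum_sub_le (hloc : SewingBound Ξ (Set.Icc a b) c θ)
    (hc : 0 ≤ c) (hθ : 1 < θ) (hab : a < b) :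
    ∃ I, ∀ {N : ℕ} {p : ℕ → ℝ} {δ : ℝ}, IsPartition a b N p →
      (∀ i < N, p (i + 1) - p i ≤ δ) → |riemannSum Ξ N p - I| ≤ c * δ ^ (θ - 1) * (b - a) := by
  set h : ℕ → ℝ := fun m => (b - a) / (m + 1)
  set A : ℕ → ℝ := fun m => riemannSum Ξ (m + 1) (fun i => a + i * h m)
  have hclose : ∀ {N p δ} m, IsPartition a b N p → (∀ i < N, p (i + 1) - p i ≤ δ) →
      |riemannSum Ξ N p - A m| ≤ c * (δ ^ (θ - 1) + h m ^ (θ - 1)) * (b - a) :=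
    fun m hp hδ => hloc.abs_riemannSum_sub_riemannSum_le hc hθ.le hp (isPartition_uniform hab m)
      hδ (δ' := (b - a) / (m + 1)) fun i _ => le_of_eq (by push_cast; ring)
  have hh : Tendsto (fun m => h m ^ (θ - 1)) atTop (𝓝 0) := by
    have := ((tendsto_one_div_add_atTop_nhds_zero_nat (𝕜 := ℝ)).const_mul (b - a)).rpow_const
      (p := θ - 1) (Or.inr (by linarith))
    simpa [h, div_eq_mul_one_div (b - a), Real.zero_rpow (by linarith : θ - 1 ≠ 0)] using this
  have hh_anti : ∀ m N : ℕ, N ≤ m → h m ^ (θ - 1) ≤ h N ^ (θ - 1) := by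
    intro m N hNm
    have : 0 < b - a := sub_pos.2 hab
    have : (N : ℝ) ≤ m := by exact_mod_cast hNm
    simp only [h]
    gcongr
  have hA : CauchySeq A := by
    refine cauchySeq_of_le_tendsto_0 (fun N => c * (2 * h N ^ (θ - 1)) * (b - a))
      (fun m m' N hm hm' => ?_) (by simpa using ((hh.const_mul 2).const_mul c).mul_const (b - a))
    rw [Real.dist_eq]
    refine (hclose m' (isPartition_uniform hab m) (δ := (b - a) / (m + 1))
      fun i _ => le_of_eq (by push_cast; ring)).trans ?_
    have := sub_pos.2 hab
    gcongr
    linarith [hh_anti m N hm, hh_anti m' N hm']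
  obtain ⟨I, hI⟩ := cauchySeq_tendsto_of_complete hA
  refine ⟨I, fun {N p δ} hp hδ => ?_⟩
  refine le_of_tendsto_of_tendsto' (hI.const_sub _).abs ?_ fun m => hclose m hp hδ
  simpa using ((hh.const_add (δ ^ (θ - 1))).const_mul c).mul_const (b - a)

end SewingBound

theorem abs_sub_mul_sub_le_of_holder {π S : ℝ → ℝ} {s : Set ℝ} {C D α γ u v : ℝ}
    (hC : 0 ≤ C) (hD : 0 ≤ D) (hα : 0 ≤ α) (hγ : 0 ≤ γ)
    (hπ : ∀ x ∈ s, ∀ y ∈ s, |π x - π y| ≤ C * |x - y| ^ γ)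
    (hS : ∀ x ∈ s, ∀ y ∈ s, |S x - S y| ≤ D * |x - y| ^ α) (huv : Set.Icc u v ⊆ s)
    {x y z w : ℝ} (hx : x ∈ Set.Icc u v) (hy : y ∈ Set.Icc u v) (hz : z ∈ Set.Icc u v)
    (hw : w ∈ Set.Icc u v) :
    |(π x - π y) * (S z - S w)| ≤ C * D * (v - u) ^ (α + γ) := by
  have hdist : ∀ {p q}, p ∈ Set.Icc u v → q ∈ Set.Icc u v → |p - q| ≤ v - u := fun hp hq =>
    Real.dist_eq _ _ ▸ Real.dist_le_of_mem_Icc hp hq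
  rw [abs_mul, Real.rpow_add_of_nonneg (sub_nonneg.2 (hx.1.trans hx.2)) hα hγ]
  calc _ ≤ (C * |x - y| ^ γ) * (D * |z - w| ^ α) :=
        mul_le_mul (hπ x (huv hx) y (huv hy)) (hS z (huv hz) w (huv hw)) (abs_nonneg _)
          (by positivity)
    _ ≤ (C * (v - u) ^ γ) * (D * (v - u) ^ α) :=
        mul_le_mul (mul_le_mul_of_nonneg_left (Real.rpow_le_rpow (abs_nonneg _) (hdist hx hy) hγ) hC)
          (mul_le_mul_of_nonneg_left (Real.rpow_le_rpow (abs_nonneg _) (hdist hz hw) hα) hD)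
          (by positivity) (mul_nonneg hC (Real.rpow_nonneg (sub_nonneg.2 (hx.1.trans hx.2)) _))
    _ = C * D * ((v - u) ^ α * (v - u) ^ γ) := by ring

theorem abs_sum_sub_riemannSum_le {π S : ℝ → ℝ} {a b C D α γ δ : ℝ} (hC : 0 ≤ C) (hD : 0 ≤ D)
    (hα : 0 ≤ α) (hγ : 0 ≤ γ) (hαγ : 1 ≤ α + γ)
    (hπ : ∀ x ∈ Set.Icc a b, ∀ y ∈ Set.Icc a b, |π x - π y| ≤ C * |x - y| ^ γ)
    (hS : ∀ x ∈ Set.Icc a b, ∀ y ∈ Set.Icc a b, |S x - S y| ≤ D * |x - y| ^ α)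
    {n : ℕ} {t ξ : ℕ → ℝ} (ht : IsPartition a b n t) (hδ : ∀ i < n, t (i + 1) - t i ≤ δ)
    (hξ : ∀ i < n, ξ i ∈ Set.Icc (t i) (t (i + 1))) :
    |∑ i ∈ range n, π (ξ i) * (S (t (i + 1)) - S (t i)) -
        riemannSum (fun x y => π x * (S y - S x)) n t| ≤ C * D * δ ^ (α + γ - 1) * (b - a) := by
  rw [riemannSum, ← sum_sub_distrib, ← ht.zero_eq, ← ht.last_eq, mul_assoc]
  have hterm : ∀ i < n, |π (ξ i) * (S (t (i + 1)) - S (t i)) - π (t i) * (S (t (i + 1)) - S (t i))|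
      ≤ C * D * (t (i + 1) - t i) ^ (α + γ) := fun i hi => by
    have hti : t i ≤ t (i + 1) := (ht.strictMonoOn hi.le hi (Nat.lt_succ_self i)).le
    rw [← sub_mul]
    exact abs_sub_mul_sub_le_of_holder hC hD hα hγ hπ hS
      (Set.Icc_subset_Icc (ht.mem_Icc hi.le).1 (ht.mem_Icc hi).2) (hξ i hi)
      (Set.left_mem_Icc.2 hti) (Set.right_mem_Icc.2 hti) (Set.left_mem_Icc.2 hti)
  calc _ ≤ ∑ i ∈ range n, C * D * (t (i + 1) - t i) ^ (α + γ) :=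
        (abs_sum_le_sum_abs _ _).trans (sum_le_sum fun i hi => hterm i (mem_range.1 hi))
    _ ≤ C * D * (δ ^ (α + γ - 1) * (t n - t 0)) := by
        rw [← mul_sum]
        exact mul_le_mul_of_nonneg_left
          (sum_sub_rpow_le_mul ht.strictMonoOn.monotoneOn hαγ hδ) (mul_nonneg hC hD)

theorem abs_sub_sub_le_of_holder {π S : ℝ → ℝ} {s : Set ℝ} {C D α γ : ℝ}
    (hC : 0 ≤ C) (hD : 0 ≤ D) (hα : 0 ≤ α) (hγ : 0 ≤ γ)
    (hπ : ∀ x ∈ s, ∀ y ∈ s, |π x - π y| ≤ C * |x - y| ^ γ)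
    (hS : ∀ x ∈ s, ∀ y ∈ s, |S x - S y| ≤ D * |x - y| ^ α) (hs : s.OrdConnected)
    {x y z : ℝ} (hx : x ∈ s) (hz : z ∈ s) (hxy : x ≤ y) (hyz : y ≤ z) :
    |π x * (S z - S x) - π x * (S y - S x) - π y * (S z - S y)| ≤
      C * D * (z - x) ^ (α + γ) := by
  rw [show π x * (S z - S x) - π x * (S y - S x) - π y * (S z - S y) =
    (π x - π y) * (S z - S y) by ring]
  exact abs_sub_mul_sub_le_of_holder hC hD hα hγ hπ hS (hs.out hx hz) ⟨le_rfl, hxy.trans hyz⟩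
    ⟨hxy, hyz⟩ ⟨hxy.trans hyz, le_rfl⟩ ⟨hxy, hyz⟩

theorem exists_pos_mul_rpow_lt (M : ℝ) {p ε : ℝ} (hp : 0 < p) (hε : 0 < ε) :
    ∃ δ > 0, M * δ ^ p < ε := by
  have h : Tendsto (fun δ : ℝ => M * δ ^ p) (𝓝 0) (𝓝 (M * 0 ^ p)) :=
    (tendsto_id.rpow_const (Or.inr hp.le)).const_mul M
  rw [Real.zero_rpow hp.ne', mul_zero] at h
  have hsmall : ∀ᶠ δ in 𝓝[>] 0, M * δ ^ p < ε :=
    nhdsWithin_le_nhds (h.eventually (gt_mem_nhds hε))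
  obtain ⟨δ, hδε, hδ⟩ := (hsmall.and self_mem_nhdsWithin).exists
  exact ⟨δ, hδ, hδε⟩

theorem young_kondurar_general
    (T : ℝ) (hT : 0 < T)
    (α γ : ℝ) (hα0 : 0 < α) (hγ0 : 0 < γ)
    (hαγ : γ > 1 - α)
    (S π : ℝ → ℝ)
    (hS : ∃ C : ℝ, 0 ≤ C ∧ ∀ x ∈ Set.Icc (0 : ℝ) T, ∀ y ∈ Set.Icc (0 : ℝ) T,
        |S x - S y| ≤ C * |x - y| ^ α)
    (hπ : ∃ C : ℝ, 0 ≤ C ∧ ∀ x ∈ Set.Icc (0 : ℝ) T, ∀ y ∈ Set.Icc (0 : ℝ) T,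
        |π x - π y| ≤ C * |x - y| ^ γ) :
    ∃ I : ℝ, ∀ ε > (0 : ℝ), ∃ δ > (0 : ℝ), ∀ (n : ℕ) (t ξ : ℕ → ℝ),
      0 < n → t 0 = 0 → t n = T →
      (∀ i < n, t i < t (i + 1)) →
      (∀ i < n, t (i + 1) - t i < δ) →
      (∀ i < n, ξ i ∈ Set.Icc (t i) (t (i + 1))) →
      |(∑ i ∈ Finset.range n, π (ξ i) * (S (t (i + 1)) - S (t i))) - I| < ε := by
  obtain ⟨D, hD, hS⟩ := hS
  obtain ⟨C, hC, hπ⟩ := hπ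
  have hθ : 1 < α + γ := by linarith
  have hloc := sewingBound_of_abs_sub_le (Ξ := fun x y => π x * (S y - S x)) (mul_nonneg hC hD) hθ
    fun x hx _ _ z hz hxy hyz =>
      abs_sub_sub_le_of_holder hC hD hα0.le hγ0.le hπ hS Set.ordConnected_Icc hx hz hxy hyz
  set c := C * D * 2 ^ (α + γ) * ∑' k : ℕ, (k : ℝ) ^ (-(α + γ))
  obtain ⟨I, hI⟩ := hloc.exists_forall_abs_riemannSum_sub_le (by positivity) hθ hT
  refine ⟨I, fun ε hε => ?_⟩
  obtain ⟨δ, hδ, hδε⟩ := exists_pos_mul_rpow_lt ((C * D + c) * T) (by linarith : 0 < α + γ - 1) hε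
  refine ⟨δ, hδ, fun n t ξ _ ht0 htn ht hmesh hξ => ?_⟩
  have hp : IsPartition 0 T n t := ⟨ht0, htn, strictMonoOn_Iic_of_lt_succ fun i hi => ht i hi⟩
  have hmesh' : ∀ i < n, t (i + 1) - t i ≤ δ := fun i hi => (hmesh i hi).le
  calc _ ≤ _ := abs_sub_le _ (riemannSum (fun x y => π x * (S y - S x)) n t) I
    _ ≤ C * D * δ ^ (α + γ - 1) * (T - 0) + c * δ ^ (α + γ - 1) * (T - 0) :=
        add_le_add (abs_sum_sub_riemannSum_le hC hD hα0.le hγ0.le hθ.le hπ hS hp hmesh' hξ)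
          (hI hp hmesh')
    _ = (C * D + c) * T * δ ^ (α + γ - 1) := by ring
    _ < ε := hδε

/-- **Young–Kondurar theorem.** If `S` is `α`-Hölder continuous and `π` is `γ`-Hölder
continuous on `[0, T]` with `γ > 1 - α`, then the Riemann–Stieltjes integral
`∫₀ᵀ π dS` exists as a limit of Riemann–Stieltjes sums: there is a real number `I`
such that for every `ε > 0` there is `δ > 0` such that every tagged partition
`0 = t₀ < t₁ < ⋯ < tₙ = T` of mesh `< δ` with tags `ξᵢ ∈ [tᵢ, tᵢ₊₁]` satisfies
`|∑ π(ξᵢ)(S(tᵢ₊₁) - S(tᵢ)) - I| < ε`. -/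
theorem young_kondurar
    (T : ℝ) (hT : 0 < T)
    (α γ : ℝ) (hα0 : 0 < α) (hα1 : α ≤ 1) (hγ0 : 0 < γ) (hγ1 : γ ≤ 1)
    (hαγ : γ > 1 - α)
    (S π : ℝ → ℝ)
    (hS : ∃ C : ℝ, 0 ≤ C ∧ ∀ x ∈ Set.Icc (0 : ℝ) T, ∀ y ∈ Set.Icc (0 : ℝ) T,
        |S x - S y| ≤ C * |x - y| ^ α)
    (hπ : ∃ C : ℝ, 0 ≤ C ∧ ∀ x ∈ Set.Icc (0 : ℝ) T, ∀ y ∈ Set.Icc (0 : ℝ) T,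
        |π x - π y| ≤ C * |x - y| ^ γ) :
    ∃ I : ℝ, ∀ ε > (0 : ℝ), ∃ δ > (0 : ℝ), ∀ (n : ℕ) (t ξ : ℕ → ℝ),
      0 < n → t 0 = 0 → t n = T →
      (∀ i < n, t i < t (i + 1)) →
      (∀ i < n, t (i + 1) - t i < δ) →
      (∀ i < n, ξ i ∈ Set.Icc (t i) (t (i + 1))) →
      |(∑ i ∈ Finset.range n, π (ξ i) * (S (t (i + 1)) - S (t i))) - I| < ε :=
  young_kondurar_general T hT α γ hα0 hγ0 hαγ S π hS hπ
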